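/- arXiv:1301.4793 — 3 statements merged into one kernel-verified Lean document; each statement's English description precedes it below -/
import Mathlib

section
/- Let A be a real n×n matrix that is diagonalizable over ℂ as A = Q Λ Q⁻¹ with Q an invertible complex n×n matrix and Λ = diag(λ₁,…,λₙ), let b ∈ ℝⁿ, and assume λ_k + conj(λ_ℓ) ≠ 0 for all 1 ≤ k, ℓ ≤ n. Then for every t ≥ 0, ∫₀ᵗ e^{Aτ} b bᵀ e^{Aᵀτ} dτ = Q Θf(t) Qᴴ, where Θf(t) is the complex n×n matrix with entries Θf(t)_{k,ℓ} = (Q⁻¹b)_k · conj((Q⁻¹b)_ℓ) / (λ_k + conj(λ_ℓ)) · (e^{(λ_k + conj(λ_ℓ)) t} − 1). -/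
/-!
Over `ℂ`, `e^{τA} = Q e^{τΛ} Q⁻¹`, and since `A` is real, `e^{τAᵀ}` is the conjugate transpose of
`e^{τA}`. With `c = Q⁻¹ b` the integrand is therefore `Q (e^{τΛ} c) (e^{τΛ} c)ᴴ Qᴴ`, whose middle
factor has entries `c_k conj(c_l) e^{μ τ}` with `μ = λ_k + conj λ_l ≠ 0`; these integrate to
`c_k conj(c_l) (e^{μ t} - 1) / μ`.
-/

open Matrix MeasureTheory

namespace Matrix

variable {m n : Type*}

theorem map_ofReal_transpose (M : Matrix m n ℝ) :
    (Mᵀ).map Complex.ofReal = (M.map Complex.ofReal)ᴴ := by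
  ext i j
  simp

theorem map_ofReal_of_intervalIntegral (M : ℝ → Matrix m n ℝ) (a b : ℝ) :
    (of fun k l => ∫ τ in a..b, M τ k l).map Complex.ofReal =
      of fun k l => ∫ τ in a..b, (M τ).map Complex.ofReal k l := by
  ext k l
  exact intervalIntegral.integral_ofReal.symm

variable [Fintype m]

theorem mul_vecMulVec_star_mul_conjTranspose {α : Type*} [CommRing α] [StarRing α]
    (P : Matrix n m α) (x : m → α) :
    P * vecMulVec x (star x) * Pᴴ = vecMulVec (P *ᵥ x) (star (P *ᵥ x)) := by
  rw [mul_vecMulVec, vecMulVec_mul, star_mulVec]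

theorem of_intervalIntegral_mul_mul {p q : Type*} [Fintype n] {P : Matrix p m ℂ}
    {R : Matrix n q ℂ} {M : ℝ → Matrix m n ℂ} {a b : ℝ}
    (hM : ∀ i j, IntervalIntegrable (fun τ => M τ i j) volume a b) :
    (of fun k l => ∫ τ in a..b, (P * M τ * R) k l) =
      P * (of fun i j => ∫ τ in a..b, M τ i j) * R := by
  ext k l
  simp only [mul_apply, of_apply, Finset.sum_mul]
  rw [intervalIntegral.integral_finsetSum fun j _ => ?_]
  · refine Finset.sum_congr rfl fun j _ => ?_
    rw [intervalIntegral.integral_finsetSum fun i _ => ?_]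
    · refine Finset.sum_congr rfl fun i _ => ?_
      rw [intervalIntegral.integral_mul_const, intervalIntegral.integral_const_mul]
    · exact ((hM i j).const_mul _).mul_const _
  · simpa only [Finset.sum_fn] using
      IntervalIntegrable.sum Finset.univ fun i _ => ((hM i j).const_mul (P k i)).mul_const (R j l)

variable [DecidableEq m]

open scoped Norms.Operator in
theorem map_ofReal_exp (M : Matrix m m ℝ) :
    (NormedSpace.exp M).map Complex.ofReal = NormedSpace.exp (M.map Complex.ofReal) :=
  NormedSpace.map_exp Complex.ofRealHom.mapMatrix
    (continuous_id.matrix_map Complex.continuous_ofReal) M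

theorem exp_conj_diagonal {Q : Matrix m m ℂ} (hQ : IsUnit Q.det) (v : m → ℂ) :
    NormedSpace.exp (Q * diagonal v * Q⁻¹) =
      Q * diagonal (fun k => Complex.exp (v k)) * Q⁻¹ := by
  rw [exp_conj _ _ ((isUnit_iff_isUnit_det Q).mpr hQ), exp_diagonal]
  congr
  funext k
  rw [Pi.coe_exp, Complex.exp_eq_exp_ℂ]

theorem map_ofReal_exp_smul_of_diagonalization {A : Matrix m m ℝ} {Q : Matrix m m ℂ}
    {lam : m → ℂ} (hQ : IsUnit Q.det) (hA : A.map Complex.ofReal = Q * diagonal lam * Q⁻¹)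
    (τ : ℝ) :
    (NormedSpace.exp (τ • A)).map Complex.ofReal =
      Q * diagonal (fun k => Complex.exp (lam k * τ)) * Q⁻¹ := by
  have hτA : (τ • A).map Complex.ofReal = Q * diagonal (fun k => lam k * τ) * Q⁻¹ := by
    have : (τ • A).map Complex.ofReal = (τ : ℂ) • A.map Complex.ofReal := by
      ext i j
      simp
    rw [this, hA, ← smul_mul_assoc, ← mul_smul_comm, ← diagonal_smul]
    congr 3 with k
    exact mul_comm _ _
  rw [map_ofReal_exp, hτA, exp_conj_diagonal hQ]

theorem map_ofReal_exp_smul_mul_vecMulVec_mul_exp_smul_transpose {A : Matrix m m ℝ}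
    {Q : Matrix m m ℂ} {lam : m → ℂ} (hQ : IsUnit Q.det)
    (hA : A.map Complex.ofReal = Q * diagonal lam * Q⁻¹) (b : m → ℝ) (τ : ℝ) :
    (NormedSpace.exp (τ • A) * vecMulVec b b * NormedSpace.exp (τ • Aᵀ)).map Complex.ofReal =
      Q * (of fun k l => (Q⁻¹ *ᵥ fun i => (b i : ℂ)) k *
          starRingEnd ℂ ((Q⁻¹ *ᵥ fun i => (b i : ℂ)) l) *
          Complex.exp ((lam k + starRingEnd ℂ (lam l)) * τ)) * Qᴴ := by
  have map_mul_ofReal (X Y : Matrix m m ℝ) :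
      (X * Y).map Complex.ofReal = X.map Complex.ofReal * Y.map Complex.ofReal :=
    Matrix.map_mul (f := Complex.ofRealHom)
  have hexpT : (NormedSpace.exp (τ • Aᵀ)).map Complex.ofReal =
      ((NormedSpace.exp (τ • A)).map Complex.ofReal)ᴴ := by
    rw [← transpose_smul, exp_transpose, map_ofReal_transpose]
  have hb : (vecMulVec b b).map Complex.ofReal =
      vecMulVec (fun i => (b i : ℂ)) (star fun i => (b i : ℂ)) := by
    ext i j
    simp [vecMulVec_apply]
  rw [map_mul_ofReal, map_mul_ofReal, hexpT, hb, mul_vecMulVec_star_mul_conjTranspose,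
    map_ofReal_exp_smul_of_diagonalization hQ hA, Matrix.mul_assoc, ← mulVec_mulVec,
    ← mul_vecMulVec_star_mul_conjTranspose]
  congr
  ext k l
  simp only [vecMulVec_apply, of_apply, ← mulVec_mulVec, mulVec_diagonal, Pi.star_apply,
    star_mul', Complex.star_def, ← Complex.exp_conj, add_mul, Complex.exp_add, map_mul,
    Complex.conj_ofReal]
  ring

end Matrix

theorem forward_gramian_closed_form_general
    {n : ℕ} (A : Matrix (Fin n) (Fin n) ℝ) (Q : Matrix (Fin n) (Fin n) ℂ)
    (lam : Fin n → ℂ) (b : Fin n → ℝ)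
    (hQ : IsUnit Q.det)
    (hA : A.map (Complex.ofReal) = Q * Matrix.diagonal lam * Q⁻¹)
    (hlam : ∀ k l : Fin n, lam k + starRingEnd ℂ (lam l) ≠ 0)
    (t : ℝ) :
    (Matrix.of fun k l : Fin n =>
        ∫ τ in (0:ℝ)..t,
          (NormedSpace.exp (τ • A) * Matrix.vecMulVec b b *
            NormedSpace.exp (τ • Aᵀ)) k l).map (Complex.ofReal)
      = Q * (Matrix.of fun k l : Fin n =>
            (Q⁻¹ *ᵥ fun i => ((b i : ℂ))) k *
              starRingEnd ℂ ((Q⁻¹ *ᵥ fun i => ((b i : ℂ))) l) /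
                (lam k + starRingEnd ℂ (lam l)) *
              (Complex.exp ((lam k + starRingEnd ℂ (lam l)) * t) - 1)) * Qᴴ := by
  rw [map_ofReal_of_intervalIntegral]
  simp_rw [map_ofReal_exp_smul_mul_vecMulVec_mul_exp_smul_transpose hQ hA]
  rw [of_intervalIntegral_mul_mul fun k l => by
    simp only [of_apply]
    exact Continuous.intervalIntegrable (by fun_prop) _ _]
  congr
  ext k l
  simp only [of_apply]
  rw [intervalIntegral.integral_const_mul, integral_exp_mul_complex (hlam k l)]
  simp only [Complex.ofReal_zero, mul_zero, Complex.exp_zero]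
  ring

/-- closed form of the forward Gramian integral
`∫₀ᵗ e^{Aτ} b bᵀ e^{Aᵀτ} dτ = Q Θf(t) Qᴴ` for a diagonalizable `A = Q Λ Q⁻¹`. -/
theorem forward_gramian_closed_form
    {n : ℕ} (A : Matrix (Fin n) (Fin n) ℝ) (Q : Matrix (Fin n) (Fin n) ℂ)
    (lam : Fin n → ℂ) (b : Fin n → ℝ)
    (hQ : IsUnit Q.det)
    (hA : A.map (Complex.ofReal) = Q * Matrix.diagonal lam * Q⁻¹)
    (hlam : ∀ k l : Fin n, lam k + starRingEnd ℂ (lam l) ≠ 0)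
    (t : ℝ) (ht : 0 ≤ t) :
    (Matrix.of fun k l : Fin n =>
        ∫ τ in (0:ℝ)..t,
          (NormedSpace.exp (τ • A) * Matrix.vecMulVec b b *
            NormedSpace.exp (τ • Aᵀ)) k l).map (Complex.ofReal)
      = Q * (Matrix.of fun k l : Fin n =>
            (Q⁻¹ *ᵥ fun i => ((b i : ℂ))) k *
              starRingEnd ℂ ((Q⁻¹ *ᵥ fun i => ((b i : ℂ))) l) /
                (lam k + starRingEnd ℂ (lam l)) *
              (Complex.exp ((lam k + starRingEnd ℂ (lam l)) * t) - 1)) * Qᴴ :=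
  forward_gramian_closed_form_general A Q lam b hQ hA hlam t
end

section
/- Let A be a real n×n matrix that is diagonalizable over ℂ as A = Q Λ Q⁻¹ with Q an invertible complex n×n matrix and Λ = diag(λ₁,…,λₙ), let b ∈ ℝⁿ, and assume λ_k + conj(λ_ℓ) ≠ 0 for all 1 ≤ k, ℓ ≤ n. Then for every t ≥ 0, ∫₀ᵗ e^{−Aτ} b bᵀ e^{−Aᵀτ} dτ = Q Θb(t) Qᴴ, where Θb(t) is the complex n×n matrix with entries Θb(t)_{k,ℓ} = (Q⁻¹b)_k · conj((Q⁻¹b)_ℓ) / (λ_k + conj(λ_ℓ)) · (1 − e^{−(λ_k + conj(λ_ℓ)) t}). -/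
open Matrix MeasureTheory

/-! Complexifying, `A = QΛQ⁻¹` gives `e^{-τA} = Q e^{-τΛ} Q⁻¹`, and as `A` is real, `e^{-τAᵀ}` is
the conjugate transpose of `e^{-τA}`. So the integrand is `Q (w wᴴ) Qᴴ` with `w = e^{-τΛ} Q⁻¹b`,
whose `(k, ℓ)` entry is `(Q⁻¹b)_k conj((Q⁻¹b)_ℓ) e^{-(λ_k + conj λ_ℓ)τ}`; integrating these
exponentials entrywise gives `Θb(t)`. -/

section

-- `NormedSpace.exp` does not depend on the norm; any submultiplicative one unlocks `map_exp`.
attribute [local instance] Matrix.linftyOpNormedRing Matrix.linftyOpNormedAlgebra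

theorem Matrix.exp_map_ofReal {m : Type*} [Fintype m] [DecidableEq m] (M : Matrix m m ℝ) :
    NormedSpace.exp (M.map Complex.ofReal) = (NormedSpace.exp M).map Complex.ofReal :=
  (NormedSpace.map_exp Complex.ofRealHom.mapMatrix
    (continuous_id.matrix_map Complex.continuous_ofReal) M).symm

end

namespace Matrix

variable {m : Type*} [Fintype m]

theorem exp_smul_conj_diagonal [DecidableEq m] (s : ℂ) {Q : Matrix m m ℂ} (hQ : IsUnit Q)
    (d : m → ℂ) :
    NormedSpace.exp (s • (Q * diagonal d * Q⁻¹))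
      = Q * diagonal (fun k => Complex.exp (s * d k)) * Q⁻¹ := by
  rw [← smul_mul_assoc, ← mul_smul_comm, ← diagonal_smul, exp_conj Q _ hQ, exp_diagonal,
    Pi.exp_def, ← Complex.exp_eq_exp_ℂ]
  rfl

theorem map_ofReal_exp_smul_of_diagonalizable [DecidableEq m] {A : Matrix m m ℝ}
    {Q : Matrix m m ℂ} (hQ : IsUnit Q) {d : m → ℂ}
    (hA : A.map Complex.ofReal = Q * diagonal d * Q⁻¹) (s : ℝ) :
    (NormedSpace.exp (s • A)).map Complex.ofReal
      = Q * diagonal (fun k => Complex.exp (s * d k)) * Q⁻¹ := by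
  have hsmul : (s • A).map Complex.ofReal = (s : ℂ) • A.map Complex.ofReal := by
    ext; simp
  rw [← exp_map_ofReal, hsmul, hA, exp_smul_conj_diagonal _ hQ]

theorem map_ofReal_mul_vecMulVec_mul_transpose (E : Matrix m m ℝ) (b : m → ℝ) :
    (E * vecMulVec b b * Eᵀ).map Complex.ofReal
      = vecMulVec (E.map Complex.ofReal *ᵥ fun i => (b i : ℂ))
          (star (E.map Complex.ofReal *ᵥ fun i => (b i : ℂ))) := by
  have h : (E.map Complex.ofReal *ᵥ fun i => (b i : ℂ)) = fun i => ((E *ᵥ b) i : ℂ) :=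
    funext fun i => (RingHom.map_mulVec Complex.ofRealHom E b i).symm
  rw [mul_vecMulVec, vecMulVec_mul, ← mulVec_transpose, transpose_transpose, h]
  ext k l
  simp [vecMulVec_apply]

theorem vecMulVec_mulVec_star (Q : Matrix m m ℂ) (w : m → ℂ) :
    vecMulVec (Q *ᵥ w) (star (Q *ᵥ w)) = Q * vecMulVec w (star w) * Qᴴ := by
  rw [star_mulVec, mul_vecMulVec, vecMulVec_mul]

theorem intervalIntegral_mul_mul {𝕜 : Type*} [RCLike 𝕜] {l n p : Type*} [Fintype n]
    (L : Matrix l m 𝕜) (M : ℝ → Matrix m n 𝕜) (R : Matrix n p 𝕜) {a b : ℝ}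
    (hM : ∀ i j, IntervalIntegrable (fun τ => M τ i j) volume a b) :
    (of fun k q => ∫ τ in a..b, (L * M τ * R) k q)
      = L * (of fun i j => ∫ τ in a..b, M τ i j) * R := by
  have hint : ∀ k q i j, IntervalIntegrable (fun τ => L k i * M τ i j * R j q) volume a b :=
    fun k q i j => ((hM i j).const_mul _).mul_const _
  ext k q
  simp only [mul_apply, of_apply, Finset.sum_mul]
  have hsum : ∀ j, IntervalIntegrable (fun τ => ∑ i, L k i * M τ i j * R j q) volume a b :=
    fun j => by simpa only [Finset.sum_fn] using IntervalIntegrable.sum _ fun i _ => hint k q i j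
  rw [intervalIntegral.integral_finsetSum fun j _ => hsum j]
  refine Finset.sum_congr rfl fun j _ => ?_
  rw [intervalIntegral.integral_finsetSum fun i _ => hint k q i j]
  refine Finset.sum_congr rfl fun i _ => ?_
  rw [intervalIntegral.integral_mul_const, intervalIntegral.integral_const_mul]

end Matrix

theorem integral_exp_neg_mul_complex {μ : ℂ} (hμ : μ ≠ 0) (t : ℝ) :
    ∫ τ in (0:ℝ)..t, Complex.exp (-(μ * τ)) = (1 - Complex.exp (-(μ * t))) / μ := by
  simp_rw [← neg_mul]
  rw [integral_exp_mul_complex (neg_ne_zero.mpr hμ)]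
  simp only [Complex.ofReal_zero, mul_zero, Complex.exp_zero, div_neg, ← neg_div, neg_sub]

theorem backward_gramian_closed_form_general
    {n : ℕ} (A : Matrix (Fin n) (Fin n) ℝ) (Q : Matrix (Fin n) (Fin n) ℂ)
    (lam : Fin n → ℂ) (b : Fin n → ℝ)
    (hQ : IsUnit Q.det)
    (hA : A.map (Complex.ofReal) = Q * Matrix.diagonal lam * Q⁻¹)
    (hlam : ∀ k l : Fin n, lam k + starRingEnd ℂ (lam l) ≠ 0)
    (t : ℝ) :
    (Matrix.of fun k l : Fin n =>
        ∫ τ in (0:ℝ)..t,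
          (NormedSpace.exp ((-τ) • A) * Matrix.vecMulVec b b *
            NormedSpace.exp ((-τ) • Aᵀ)) k l).map (Complex.ofReal)
      = Q * (Matrix.of fun k l : Fin n =>
            (Q⁻¹ *ᵥ fun i => ((b i : ℂ))) k *
              starRingEnd ℂ ((Q⁻¹ *ᵥ fun i => ((b i : ℂ))) l) /
                (lam k + starRingEnd ℂ (lam l)) *
              (1 - Complex.exp (-((lam k + starRingEnd ℂ (lam l)) * t)))) * Qᴴ := by
  have hQu : IsUnit Q := (isUnit_iff_isUnit_det Q).mpr hQ
  set c := Q⁻¹ *ᵥ fun i => (b i : ℂ)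
  set w : ℝ → Fin n → ℂ := fun τ => diagonal (fun k => Complex.exp ((-τ : ℝ) * lam k)) *ᵥ c
  have hintegrand : ∀ τ : ℝ,
      (NormedSpace.exp ((-τ) • A) * vecMulVec b b * NormedSpace.exp ((-τ) • Aᵀ)).map
        Complex.ofReal = Q * vecMulVec (w τ) (star (w τ)) * Qᴴ := fun τ => by
    rw [← transpose_smul, exp_transpose, map_ofReal_mul_vecMulVec_mul_transpose,
      map_ofReal_exp_smul_of_diagonalizable hQu hA, ← mulVec_mulVec, ← mulVec_mulVec,
      vecMulVec_mulVec_star]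
  have hentry : ∀ k l (τ : ℝ), vecMulVec (w τ) (star (w τ)) k l
      = c k * starRingEnd ℂ (c l) * Complex.exp (-((lam k + starRingEnd ℂ (lam l)) * τ)) := by
    intro k l τ
    simp only [w, vecMulVec_apply, mulVec_diagonal, Pi.star_apply, star_mul', Complex.star_def,
      ← Complex.exp_conj, map_mul, Complex.conj_ofReal]
    rw [show -((lam k + starRingEnd ℂ (lam l)) * τ)
        = (-τ : ℝ) * lam k + (-τ : ℝ) * starRingEnd ℂ (lam l) by push_cast; ring, Complex.exp_add]
    ring
  calc _ = of fun k l => ∫ τ in (0:ℝ)..t, (Q * vecMulVec (w τ) (star (w τ)) * Qᴴ) k l := by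
        ext k l
        simp only [map_apply, of_apply, ← intervalIntegral.integral_ofReal, ← hintegrand]
    _ = _ := by
        rw [intervalIntegral_mul_mul _ _ _ fun i j =>
          Continuous.intervalIntegrable (by simp only [hentry]; fun_prop) _ _]
        congr 2
        ext k l
        simp only [of_apply, hentry, intervalIntegral.integral_const_mul,
          integral_exp_neg_mul_complex (hlam k l)]
        ring

/-- closed form of the backward Gramian integral
`∫₀ᵗ e^{−Aτ} b bᵀ e^{−Aᵀτ} dτ = Q Θb(t) Qᴴ` for a diagonalizable `A = Q Λ Q⁻¹`. -/
theorem backward_gramian_closed_form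
    {n : ℕ} (A : Matrix (Fin n) (Fin n) ℝ) (Q : Matrix (Fin n) (Fin n) ℂ)
    (lam : Fin n → ℂ) (b : Fin n → ℝ)
    (hQ : IsUnit Q.det)
    (hA : A.map (Complex.ofReal) = Q * Matrix.diagonal lam * Q⁻¹)
    (hlam : ∀ k l : Fin n, lam k + starRingEnd ℂ (lam l) ≠ 0)
    (t : ℝ) (ht : 0 ≤ t) :
    (Matrix.of fun k l : Fin n =>
        ∫ τ in (0:ℝ)..t,
          (NormedSpace.exp ((-τ) • A) * Matrix.vecMulVec b b *
            NormedSpace.exp ((-τ) • Aᵀ)) k l).map (Complex.ofReal)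
      = Q * (Matrix.of fun k l : Fin n =>
            (Q⁻¹ *ᵥ fun i => ((b i : ℂ))) k *
              starRingEnd ℂ ((Q⁻¹ *ᵥ fun i => ((b i : ℂ))) l) /
                (lam k + starRingEnd ℂ (lam l)) *
              (1 - Complex.exp (-((lam k + starRingEnd ℂ (lam l)) * t)))) * Qᴴ :=
  backward_gramian_closed_form_general A Q lam b hQ hA hlam t
end

section
/- Let A be a real n×n matrix that is diagonalizable over ℂ as A = Q Λ Q⁻¹ with Q an invertible complex n×n matrix and Λ = diag(λ₁,…,λₙ), let b ∈ ℝⁿ, and assume Re(λ_k) < 0 for all k (stability). Then the limit lim_{t→∞} ∫₀ᵗ e^{Aτ} b bᵀ e^{Aᵀτ} dτ exists and equals Q Θ∞ Qᴴ, where Θ∞ is the complex n×n matrix with entries (Θ∞)_{k,ℓ} = − (Q⁻¹b)_k · conj((Q⁻¹b)_ℓ) / (λ_k + conj(λ_ℓ)). -/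
/-!
Writing `c = Q⁻¹ b`, the diagonalisation gives `e^{τA} b = Q (e^{λ_p τ} c_p)_p`, and since this
vector is real the integrand `e^{τA} b bᵀ e^{τAᵀ}` is `Q Θ(τ) Qᴴ` with
`Θ(τ)_{pq} = c_p conj(c_q) e^{(λ_p + conj λ_q) τ}`. Each entry of `∫₀ᵗ Θ`
converges because `∫₀^∞ e^{μτ} dτ = -1/μ` when `Re μ < 0`, and conjugation by `Q` is continuous.
-/

open Matrix MeasureTheory Filter NormedSpace Topology

theorem Matrix.mul_vecMulVec_mul_transpose {m n α : Type*} [Fintype n] [CommSemiring α]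
    (M : Matrix m n α) (v : n → α) :
    M * vecMulVec v v * Mᵀ = vecMulVec (M *ᵥ v) (M *ᵥ v) := by
  rw [mul_vecMulVec, vecMulVec_mul, vecMul_transpose]

theorem Matrix.vecMulVec_mulVec_star_s7 {m n α : Type*} [Fintype n] [CommSemiring α] [StarRing α]
    (M : Matrix m n α) (v : n → α) :
    vecMulVec (M *ᵥ v) (star (M *ᵥ v)) = M * vecMulVec v (star v) * Mᴴ := by
  rw [star_mulVec, mul_vecMulVec, vecMulVec_mul]

theorem tendsto_intervalIntegral_cexp_mul {μ : ℂ} (hμ : μ.re < 0) :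
    Tendsto (fun t : ℝ => ∫ τ in (0 : ℝ)..t, Complex.exp (μ * τ)) atTop (𝓝 (-1 / μ)) := by
  have := intervalIntegral_tendsto_integral_Ioi 0 (integrableOn_exp_mul_complex_Ioi hμ 0)
    tendsto_id
  simpa [integral_exp_mul_complex_Ioi hμ, neg_div] using this

theorem Matrix.intervalIntegral_mul_mul_apply {l m n o 𝕜 : Type*} [Fintype m] [Fintype n]
    [RCLike 𝕜] (P : Matrix l m 𝕜) (R : Matrix n o 𝕜) {M : ℝ → Matrix m n 𝕜} {a b : ℝ}
    (hM : ∀ p q, IntervalIntegrable (fun τ => M τ p q) volume a b) (i : l) (j : o) :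
    ∫ τ in a..b, (P * M τ * R) i j = (P * of (fun p q => ∫ τ in a..b, M τ p q) * R) i j := by
  simp only [mul_apply, of_apply, Finset.sum_mul]
  rw [intervalIntegral.integral_finsetSum fun q _ => ?_]
  · refine Finset.sum_congr rfl fun q _ => ?_
    rw [intervalIntegral.integral_finsetSum fun p _ => ((hM p q).const_mul _).mul_const _]
    refine Finset.sum_congr rfl fun p _ => ?_
    rw [intervalIntegral.integral_mul_const, intervalIntegral.integral_const_mul]
  · simpa only [Finset.sum_fn] using
      IntervalIntegrable.sum Finset.univ fun p _ => ((hM p q).const_mul (P i p)).mul_const (R q j)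

section Diagonalizable

-- `map_exp` needs some normed algebra structure on matrices; `exp` itself does not depend on it.
attribute [local instance] Matrix.linftyOpNormedRing Matrix.linftyOpNormedAlgebra

variable {ι : Type*} [Fintype ι] [DecidableEq ι]

theorem map_ofReal_exp_smul_of_eq_conj_diagonal {A : Matrix ι ι ℝ} {Q : Matrix ι ι ℂ}
    {lam : ι → ℂ} (hQ : IsUnit Q) (hA : A.map Complex.ofReal = Q * diagonal lam * Q⁻¹) (τ : ℝ) :
    (exp (τ • A)).map Complex.ofReal = Q * diagonal (fun p => Complex.exp (lam p * τ)) * Q⁻¹ := by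
  have hmap : (exp (τ • A)).map Complex.ofReal = exp ((τ • A).map Complex.ofReal) :=
    map_exp (Complex.ofRealHom.mapMatrix : Matrix ι ι ℝ →+* Matrix ι ι ℂ)
      (continuous_id.matrix_map Complex.continuous_ofReal) (τ • A)
  have hsmul : (τ • A).map Complex.ofReal = Q * diagonal ((τ : ℂ) • lam) * Q⁻¹ := by
    rw [diagonal_smul, Matrix.mul_smul, Matrix.smul_mul, ← hA]
    ext i j
    simp
  rw [hmap, hsmul, exp_conj _ _ hQ, exp_diagonal]
  congr 3
  ext p
  rw [Pi.coe_exp, ← Complex.exp_eq_exp_ℂ, Pi.smul_apply, smul_eq_mul, mul_comm]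

theorem map_ofReal_exp_smul_mul_vecMulVec_mul_exp_smul_transpose {A : Matrix ι ι ℝ}
    {Q : Matrix ι ι ℂ} {lam : ι → ℂ} (hQ : IsUnit Q)
    (hA : A.map Complex.ofReal = Q * diagonal lam * Q⁻¹) (b : ι → ℝ) (τ : ℝ) :
    (exp (τ • A) * vecMulVec b b * exp (τ • Aᵀ)).map Complex.ofReal =
      Q * of (fun p q => (Q⁻¹ *ᵥ fun i => (b i : ℂ)) p *
        starRingEnd ℂ ((Q⁻¹ *ᵥ fun i => (b i : ℂ)) q) *
          Complex.exp ((lam p + starRingEnd ℂ (lam q)) * τ)) * Qᴴ := by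
  set c := Q⁻¹ *ᵥ fun i => (b i : ℂ)
  set v : ι → ℂ := fun p => Complex.exp (lam p * τ) * c p
  have hv : (fun i => ((exp (τ • A) *ᵥ b) i : ℂ)) = Q *ᵥ v := by
    ext i
    refine (Complex.ofRealHom.map_mulVec _ b i).trans ?_
    change ((exp (τ • A)).map Complex.ofReal *ᵥ fun i => (b i : ℂ)) i = _
    rw [map_ofReal_exp_smul_of_eq_conj_diagonal hQ hA, ← mulVec_mulVec, ← mulVec_mulVec]
    congr 1
    ext p
    rw [mulVec_diagonal]
  rw [← transpose_smul, exp_transpose, mul_vecMulVec_mul_transpose]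
  calc (vecMulVec _ _).map Complex.ofReal = vecMulVec (Q *ᵥ v) (star (Q *ᵥ v)) := by
        ext i j
        simp [vecMulVec_apply, ← hv]
    _ = Q * vecMulVec v (star v) * Qᴴ := vecMulVec_mulVec_star_s7 Q v
    _ = _ := by
        congr 2
        ext p q
        simp only [vecMulVec_apply, of_apply, Pi.star_apply, v, star_mul', Complex.star_def,
          ← Complex.exp_conj, map_mul, Complex.conj_ofReal]
        rw [add_mul, Complex.exp_add]
        ring

end Diagonalizable

theorem tendsto_intervalIntegral_modal_gramian {ι : Type*} (c lam : ι → ℂ)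
    (hstab : ∀ k, (lam k).re < 0) :
    Tendsto (fun t : ℝ => of fun p q => ∫ τ in (0 : ℝ)..t,
        c p * starRingEnd ℂ (c q) * Complex.exp ((lam p + starRingEnd ℂ (lam q)) * τ)) atTop
      (𝓝 (of fun p q => -(c p * starRingEnd ℂ (c q) / (lam p + starRingEnd ℂ (lam q))))) := by
  refine tendsto_pi_nhds.2 fun p => tendsto_pi_nhds.2 fun q => ?_
  have hre : (lam p + starRingEnd ℂ (lam q)).re < 0 := by
    simpa using add_neg (hstab p) (hstab q)
  simp only [of_apply, intervalIntegral.integral_const_mul]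
  convert (tendsto_intervalIntegral_cexp_mul hre).const_mul (c p * starRingEnd ℂ (c q)) using 2
  ring

/-- for a stable diagonalizable `A = Q Λ Q⁻¹` (all eigenvalues with negative
real part), the Gramian `∫₀ᵗ e^{Aτ} b bᵀ e^{Aᵀτ} dτ` converges entrywise, as `t → ∞`, to
`Q Θ∞ Qᴴ` with `(Θ∞)ₖₗ = −(Q⁻¹b)ₖ conj((Q⁻¹b)ₗ)/(λₖ + conj λₗ)`. -/
theorem gramian_limit_stable
    {n : ℕ} (A : Matrix (Fin n) (Fin n) ℝ) (Q : Matrix (Fin n) (Fin n) ℂ)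
    (lam : Fin n → ℂ) (b : Fin n → ℝ)
    (hQ : IsUnit Q.det)
    (hA : A.map (Complex.ofReal) = Q * Matrix.diagonal lam * Q⁻¹)
    (hstab : ∀ k : Fin n, (lam k).re < 0) :
    ∀ k l : Fin n,
      Tendsto (fun t : ℝ =>
          ((∫ τ in (0:ℝ)..t,
            (NormedSpace.exp (τ • A) * Matrix.vecMulVec b b *
              NormedSpace.exp (τ • Aᵀ)) k l : ℝ) : ℂ))
        atTop
        (nhds ((Q * (Matrix.of fun k l : Fin n =>
            -((Q⁻¹ *ᵥ fun i => ((b i : ℂ))) k *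
                starRingEnd ℂ ((Q⁻¹ *ᵥ fun i => ((b i : ℂ))) l) /
                  (lam k + starRingEnd ℂ (lam l)))) * Qᴴ) k l)) := by
  intro k l
  set c := Q⁻¹ *ᵥ fun i => (b i : ℂ)
  set M : ℝ → Matrix (Fin n) (Fin n) ℂ := fun τ => of fun p q =>
    c p * starRingEnd ℂ (c q) * Complex.exp ((lam p + starRingEnd ℂ (lam q)) * τ)
  have hM : ∀ p q, Continuous fun τ => M τ p q := fun p q => by simp only [M, of_apply]; fun_prop
  have hentry : ∀ t : ℝ, ((∫ τ in (0:ℝ)..t,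
      (exp (τ • A) * vecMulVec b b * exp (τ • Aᵀ)) k l : ℝ) : ℂ) =
        (Q * of (fun p q => ∫ τ in (0:ℝ)..t, M τ p q) * Qᴴ) k l := fun t =>
    calc _ = ∫ τ in (0:ℝ)..t, ((exp (τ • A) * vecMulVec b b * exp (τ • Aᵀ)).map
          Complex.ofReal) k l := intervalIntegral.integral_ofReal.symm
      _ = ∫ τ in (0:ℝ)..t, (Q * M τ * Qᴴ) k l := by
          simp_rw [map_ofReal_exp_smul_mul_vecMulVec_mul_exp_smul_transpose
            ((isUnit_iff_isUnit_det Q).mpr hQ) hA]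
          rfl
      _ = _ := intervalIntegral_mul_mul_apply Q Qᴴ (fun p q => (hM p q).intervalIntegrable _ _) k l
  simp_rw [hentry]
  exact ((continuous_const.matrix_mul continuous_id).matrix_mul continuous_const).matrix_elem k l
    |>.tendsto _ |>.comp (tendsto_intervalIntegral_modal_gramian c lam hstab)
end
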